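/- In ℍ¹, if u = ρ^α f(φ) in the polar coordinates ρ = ((x²+y²)²+t²)^{1/4}, φ = arccos(t/ρ²), with f ∈ C², then Δ_{ℍ¹}u = ρ^{α−2}( α(α+2)(sin φ)f(φ) + 4·d/dφ( sin φ · f'(φ) ) ) at points with x²+y² ≠ 0. -/

import Mathlib

/-- The first Heisenberg group `ℍ¹` as `ℝ³`. -/
abbrev H1 := ℝ × ℝ × ℝ

/-- The vector field `X = ∂_x + 2y ∂_t`. -/
noncomputable def Xd (u : H1 → ℝ) (p : H1) : ℝ := fderiv ℝ u p (1, 0, 2 * p.2.1)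

/-- The vector field `Y = ∂_y − 2x ∂_t`. -/
noncomputable def Yd (u : H1 → ℝ) (p : H1) : ℝ := fderiv ℝ u p (0, 1, -(2 * p.1))

/-- Horizontal gradient `∇_{ℍ¹} u = (Xu, Yu)`. -/
noncomputable def gradH (u : H1 → ℝ) (p : H1) : ℝ × ℝ := (Xd u p, Yd u p)

/-- Kohn Laplacian `Δ_{ℍ¹} = X² + Y²`. -/
noncomputable def lapH (u : H1 → ℝ) (p : H1) : ℝ := Xd (Xd u) p + Yd (Yd u) p

/-- Koranyi gauge `ρ`. -/
noncomputable def rhoH (p : H1) : ℝ := ((p.1^2 + p.2.1^2)^2 + p.2.2^2) ^ ((1:ℝ)/4)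

/-- Angular coordinate `θ = arctan (y/x)`. -/
noncomputable def thetaH (p : H1) : ℝ := Real.arctan (p.2.1 / p.1)

/-- Angular coordinate `φ = arccos (t/ρ²)`. -/
noncomputable def phiH (p : H1) : ℝ := Real.arccos (p.2.2 / (rhoH p)^2)

/-!
The functions `ρ^γ (g₀(φ) + A g₁(φ) + B g₂(φ))`, with `A = X(ρ⁴)/4` and `B = Y(ρ⁴)/4`, form a
family that `X` and `Y` map into itself, lowering `γ` by `4`: this follows from
`Xφ = -2B/ρ⁴`, `Yφ = 2A/ρ⁴`, `XA = YB = 3(x² + y²)`, `YA = t`, `XB = -t`.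
Applying `X` and `Y` twice to `ρ^α f(φ)` thus stays inside the family, and the resulting expression
becomes the claimed one after substituting `sin φ = (x² + y²)/ρ²` and `cos φ = t/ρ²`.
-/

open Real

noncomputable section

def gaugeQuartic (q : H1) : ℝ := (q.1 ^ 2 + q.2.1 ^ 2) ^ 2 + q.2.2 ^ 2

-- `X ρ⁴ = 4 gaugeX` and `Y ρ⁴ = 4 gaugeY`.
def gaugeX (q : H1) : ℝ := (q.1 ^ 2 + q.2.1 ^ 2) * q.1 + q.2.2 * q.2.1

def gaugeY (q : H1) : ℝ := (q.1 ^ 2 + q.2.1 ^ 2) * q.2.1 - q.2.2 * q.1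

def axialForm (γ : ℝ) (g₀ g₁ g₂ : ℝ → ℝ) (q : H1) : ℝ :=
  rhoH q ^ γ * (g₀ (phiH q) + gaugeX q * g₁ (phiH q) + gaugeY q * g₂ (phiH q))

end

lemma gaugeQuartic_pos {q : H1} (hq : q.1 ^ 2 + q.2.1 ^ 2 ≠ 0) : 0 < gaugeQuartic q := by
  unfold gaugeQuartic; positivity

lemma rhoH_eq_rpow (q : H1) : rhoH q = gaugeQuartic q ^ (1 / 4 : ℝ) := rfl

lemma rhoH_pos {q : H1} (hq : 0 < gaugeQuartic q) : 0 < rhoH q := rpow_pos_of_pos hq _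

lemma rhoH_pow_four (q : H1) : rhoH q ^ 4 = gaugeQuartic q := by
  rw [rhoH_eq_rpow, ← rpow_natCast, ← rpow_mul (by unfold gaugeQuartic; positivity)]
  norm_num

lemma sq_div_rhoH_sq_add {q : H1} (hq : 0 < gaugeQuartic q) :
    ((q.1 ^ 2 + q.2.1 ^ 2) / rhoH q ^ 2) ^ 2 + (q.2.2 / rhoH q ^ 2) ^ 2 = 1 := by
  have := rhoH_pos hq
  field_simp
  rw [rhoH_pow_four]; rfl

lemma sq_div_rhoH_sq_lt_one {q : H1} (hq : q.1 ^ 2 + q.2.1 ^ 2 ≠ 0) :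
    (q.2.2 / rhoH q ^ 2) ^ 2 < 1 := by
  have hw := gaugeQuartic_pos hq
  have := rhoH_pos hw
  have : 0 < ((q.1 ^ 2 + q.2.1 ^ 2) / rhoH q ^ 2) ^ 2 := by positivity
  linarith [sq_div_rhoH_sq_add hw]

lemma cos_phiH {q : H1} (hq : 0 < gaugeQuartic q) : cos (phiH q) = q.2.2 / rhoH q ^ 2 := by
  have h := sq_div_rhoH_sq_add hq
  have : (q.2.2 / rhoH q ^ 2) ^ 2 ≤ 1 := by nlinarith
  exact cos_arccos (by nlinarith) (by nlinarith)

lemma sin_phiH {q : H1} (hq : 0 < gaugeQuartic q) :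
    sin (phiH q) = (q.1 ^ 2 + q.2.1 ^ 2) / rhoH q ^ 2 := by
  rw [phiH, sin_arccos, ← sq_div_rhoH_sq_add hq, add_sub_cancel_right, sqrt_sq (by positivity)]

section Coordinates

variable (q : H1)

lemma hasFDerivAt_coordX :
    HasFDerivAt (fun q : H1 => q.1) (ContinuousLinearMap.fst ℝ ℝ (ℝ × ℝ)) q := hasFDerivAt_fst

lemma hasFDerivAt_coordY : HasFDerivAt (fun q : H1 => q.2.1)
    ((ContinuousLinearMap.fst ℝ ℝ ℝ).comp (ContinuousLinearMap.snd ℝ ℝ (ℝ × ℝ))) q :=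
  hasFDerivAt_snd.fst

lemma hasFDerivAt_coordT : HasFDerivAt (fun q : H1 => q.2.2)
    ((ContinuousLinearMap.snd ℝ ℝ ℝ).comp (ContinuousLinearMap.snd ℝ ℝ (ℝ × ℝ))) q :=
  hasFDerivAt_snd.snd

end Coordinates

lemma fderiv_gaugeQuartic_apply (q v : H1) :
    fderiv ℝ gaugeQuartic q v =
      4 * (q.1 ^ 2 + q.2.1 ^ 2) * (q.1 * v.1 + q.2.1 * v.2.1) + 2 * q.2.2 * v.2.2 := by
  have h : HasFDerivAt gaugeQuartic _ q :=
    ((((hasFDerivAt_coordX q).pow 2).add ((hasFDerivAt_coordY q).pow 2)).pow 2).add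
      ((hasFDerivAt_coordT q).pow 2)
  rw [h.fderiv]
  simp only [Pi.add_apply, Nat.add_one_sub_one, pow_one, nsmul_eq_mul, Nat.cast_ofNat, smul_add,
    add_apply, smul_apply, smul_eq_mul, ContinuousLinearMap.comp_apply,
    ContinuousLinearMap.coe_fst', ContinuousLinearMap.coe_snd']
  ring

lemma fderiv_gaugeX_apply (q v : H1) :
    fderiv ℝ gaugeX q v = (2 * (q.1 * v.1 + q.2.1 * v.2.1)) * q.1 + (q.1 ^ 2 + q.2.1 ^ 2) * v.1
      + v.2.2 * q.2.1 + q.2.2 * v.2.1 := by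
  have h : HasFDerivAt gaugeX _ q :=
    ((((hasFDerivAt_coordX q).pow 2).add ((hasFDerivAt_coordY q).pow 2)).mul
      (hasFDerivAt_coordX q)).add ((hasFDerivAt_coordT q).mul (hasFDerivAt_coordY q))
  rw [h.fderiv]
  simp only [Pi.add_apply, Nat.add_one_sub_one, pow_one, nsmul_eq_mul, Nat.cast_ofNat, smul_add,
    add_apply, smul_apply, smul_eq_mul, ContinuousLinearMap.comp_apply,
    ContinuousLinearMap.coe_fst', ContinuousLinearMap.coe_snd']
  ring

lemma fderiv_gaugeY_apply (q v : H1) :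
    fderiv ℝ gaugeY q v = (2 * (q.1 * v.1 + q.2.1 * v.2.1)) * q.2.1 + (q.1 ^ 2 + q.2.1 ^ 2) * v.2.1
      - v.2.2 * q.1 - q.2.2 * v.1 := by
  have h : HasFDerivAt gaugeY _ q :=
    ((((hasFDerivAt_coordX q).pow 2).add ((hasFDerivAt_coordY q).pow 2)).mul
      (hasFDerivAt_coordY q)).sub ((hasFDerivAt_coordT q).mul (hasFDerivAt_coordX q))
  rw [h.fderiv]
  simp only [Pi.add_apply, Nat.add_one_sub_one, pow_one, nsmul_eq_mul, Nat.cast_ofNat, smul_add,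
    add_apply, sub_apply, smul_apply, smul_eq_mul, ContinuousLinearMap.comp_apply,
    ContinuousLinearMap.coe_fst', ContinuousLinearMap.coe_snd']
  ring

lemma hasFDerivAt_gaugeQuartic (q : H1) :
    HasFDerivAt gaugeQuartic (fderiv ℝ gaugeQuartic q) q :=
  (by unfold gaugeQuartic; fun_prop : Differentiable ℝ gaugeQuartic).differentiableAt.hasFDerivAt

lemma hasFDerivAt_rhoH {q : H1} (hq : 0 < gaugeQuartic q) :
    HasFDerivAt rhoH ((4 * rhoH q ^ 3)⁻¹ • fderiv ℝ gaugeQuartic q) q := by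
  refine ((hasFDerivAt_gaugeQuartic q).rpow_const (p := 1 / 4) (Or.inl hq.ne')).congr_fderiv ?_
  congr 1
  rw [rhoH_eq_rpow, ← rpow_natCast, ← rpow_mul hq.le, mul_inv, ← rpow_neg hq.le]
  norm_num

lemma phiH_eq_arccos_mul_inv :
    phiH = fun q => arccos (q.2.2 * (rhoH q ^ 2)⁻¹) := by
  funext q; rw [phiH, div_eq_mul_inv]

lemma differentiableAt_phiH {q : H1} (hq : q.1 ^ 2 + q.2.1 ^ 2 ≠ 0) :
    DifferentiableAt ℝ phiH q := by
  have hc := sq_div_rhoH_sq_lt_one hq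
  have hρ : DifferentiableAt ℝ rhoH q := (hasFDerivAt_rhoH (gaugeQuartic_pos hq)).differentiableAt
  have hρ0 := (rhoH_pos (gaugeQuartic_pos hq)).ne'
  have hc' : DifferentiableAt ℝ (fun q : H1 => q.2.2 / rhoH q ^ 2) q := by
    fun_prop (disch := positivity)
  refine (differentiableAt_arccos.2 ⟨?_, ?_⟩).comp q hc' <;>
    intro h <;> rw [h] at hc <;> norm_num at hc

lemma fderiv_phiH_apply {q : H1} (hq : q.1 ^ 2 + q.2.1 ^ 2 ≠ 0) (v : H1) :
    fderiv ℝ phiH q v =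
      (2 * q.2.2 * (q.1 * v.1 + q.2.1 * v.2.1) - (q.1 ^ 2 + q.2.1 ^ 2) * v.2.2) /
        gaugeQuartic q := by
  have hw := gaugeQuartic_pos hq
  have hρ := rhoH_pos hw
  have hc := sq_div_rhoH_sq_lt_one hq
  rw [div_eq_mul_inv] at hc
  have h : HasFDerivAt (𝕜 := ℝ) (fun q => arccos (q.2.2 * (rhoH q ^ 2)⁻¹)) _ q :=
    (hasDerivAt_arccos (by intro h; rw [h] at hc; norm_num at hc)
      (by intro h; rw [h] at hc; norm_num at hc)).comp_hasFDerivAt q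
      ((hasFDerivAt_coordT q).mul
        ((hasDerivAt_inv (by positivity)).comp_hasFDerivAt q ((hasFDerivAt_rhoH hw).pow 2)))
  rw [← phiH_eq_arccos_mul_inv] at h
  have hsin : √(1 - (q.2.2 * (rhoH q ^ 2)⁻¹) ^ 2) = (q.1 ^ 2 + q.2.1 ^ 2) / rhoH q ^ 2 := by
    rw [← div_eq_mul_inv, ← sq_div_rhoH_sq_add hw, add_sub_cancel_right, sqrt_sq (by positivity)]
  have h4 := rhoH_pow_four q
  rw [h.fderiv]
  simp only [one_div, Nat.add_one_sub_one, pow_one, nsmul_eq_mul, Nat.cast_ofNat, mul_inv_rev,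
    neg_smul, smul_neg, smul_add, neg_neg, add_apply, smul_apply, smul_eq_mul,
    neg_apply, ContinuousLinearMap.comp_apply, ContinuousLinearMap.coe_snd']
  rw [hsin, fderiv_gaugeQuartic_apply, ← h4]
  unfold gaugeQuartic at h4
  field_simp
  rw [h4]
  ring

section AxialForm

variable {γ d₀ d₁ d₂ : ℝ} {g₀ g₁ g₂ : ℝ → ℝ} {q : H1}

lemma fderiv_axialForm_apply (hq : q.1 ^ 2 + q.2.1 ^ 2 ≠ 0) (h₀ : HasDerivAt g₀ d₀ (phiH q))
    (h₁ : HasDerivAt g₁ d₁ (phiH q)) (h₂ : HasDerivAt g₂ d₂ (phiH q)) (v : H1) :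
    fderiv ℝ (axialForm γ g₀ g₁ g₂) q v =
      γ * rhoH q ^ (γ - 4) / 4 * fderiv ℝ gaugeQuartic q v *
          (g₀ (phiH q) + gaugeX q * g₁ (phiH q) + gaugeY q * g₂ (phiH q)) +
        rhoH q ^ γ * ((d₀ + gaugeX q * d₁ + gaugeY q * d₂) * fderiv ℝ phiH q v +
          fderiv ℝ gaugeX q v * g₁ (phiH q) + fderiv ℝ gaugeY q v * g₂ (phiH q)) := by
  have hρ := rhoH_pos (gaugeQuartic_pos hq)
  have hφ := (differentiableAt_phiH hq).hasFDerivAt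
  have hA : HasFDerivAt gaugeX (fderiv ℝ gaugeX q) q :=
    (by unfold gaugeX; fun_prop : Differentiable ℝ gaugeX).differentiableAt.hasFDerivAt
  have hB : HasFDerivAt gaugeY (fderiv ℝ gaugeY q) q :=
    (by unfold gaugeY; fun_prop : Differentiable ℝ gaugeY).differentiableAt.hasFDerivAt
  have h : HasFDerivAt (axialForm γ g₀ g₁ g₂) _ q :=
    ((hasFDerivAt_rhoH (gaugeQuartic_pos hq)).rpow_const (p := γ) (Or.inl hρ.ne')).mul
      (((h₀.comp_hasFDerivAt q hφ).add (hA.mul (h₁.comp_hasFDerivAt q hφ))).add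
        (hB.mul (h₂.comp_hasFDerivAt q hφ)))
  have hpow : rhoH q ^ (γ - 1) = rhoH q ^ (γ - 4) * rhoH q ^ 3 := by
    rw [← rpow_natCast, ← rpow_add hρ]; ring_nf
  rw [h.fderiv]
  simp only [Function.comp_apply, add_apply, smul_apply, smul_eq_mul, hpow]
  field_simp
  ring

lemma rhoH_rpow_eq_mul_gaugeQuartic (hq : 0 < gaugeQuartic q) (e : ℝ) :
    rhoH q ^ e = rhoH q ^ (e - 4) * gaugeQuartic q := by
  rw [← rhoH_pow_four, ← rpow_natCast, ← rpow_add (rhoH_pos hq)]; norm_num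

lemma Xd_axialForm (hq : q.1 ^ 2 + q.2.1 ^ 2 ≠ 0) (h₀ : HasDerivAt g₀ d₀ (phiH q))
    (h₁ : HasDerivAt g₁ d₁ (phiH q)) (h₂ : HasDerivAt g₂ d₂ (phiH q)) :
    Xd (axialForm γ g₀ g₁ g₂) q = rhoH q ^ (γ - 4) *
      (γ * gaugeX q * (g₀ (phiH q) + gaugeX q * g₁ (phiH q) + gaugeY q * g₂ (phiH q)) +
        gaugeQuartic q * (3 * (q.1 ^ 2 + q.2.1 ^ 2) * g₁ (phiH q) - q.2.2 * g₂ (phiH q)) -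
        2 * gaugeY q * (d₀ + gaugeX q * d₁ + gaugeY q * d₂)) := by
  have hw := gaugeQuartic_pos hq
  rw [Xd, fderiv_axialForm_apply hq h₀ h₁ h₂, fderiv_gaugeQuartic_apply, fderiv_gaugeX_apply,
    fderiv_gaugeY_apply, fderiv_phiH_apply hq, rhoH_rpow_eq_mul_gaugeQuartic hw γ]
  field_simp
  unfold gaugeX gaugeY
  ring

lemma Yd_axialForm (hq : q.1 ^ 2 + q.2.1 ^ 2 ≠ 0) (h₀ : HasDerivAt g₀ d₀ (phiH q))
    (h₁ : HasDerivAt g₁ d₁ (phiH q)) (h₂ : HasDerivAt g₂ d₂ (phiH q)) :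
    Yd (axialForm γ g₀ g₁ g₂) q = rhoH q ^ (γ - 4) *
      (γ * gaugeY q * (g₀ (phiH q) + gaugeX q * g₁ (phiH q) + gaugeY q * g₂ (phiH q)) +
        gaugeQuartic q * (q.2.2 * g₁ (phiH q) + 3 * (q.1 ^ 2 + q.2.1 ^ 2) * g₂ (phiH q)) +
        2 * gaugeX q * (d₀ + gaugeX q * d₁ + gaugeY q * d₂)) := by
  have hw := gaugeQuartic_pos hq
  rw [Yd, fderiv_axialForm_apply hq h₀ h₁ h₂, fderiv_gaugeQuartic_apply, fderiv_gaugeX_apply,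
    fderiv_gaugeY_apply, fderiv_phiH_apply hq, rhoH_rpow_eq_mul_gaugeQuartic hw γ]
  field_simp
  unfold gaugeX gaugeY
  ring

end AxialForm

lemma Xd_congr_of_eventuallyEq {u v : H1 → ℝ} {p : H1} (h : u =ᶠ[nhds p] v) :
    Xd u p = Xd v p := by
  rw [Xd, Xd, h.fderiv_eq]

lemma Yd_congr_of_eventuallyEq {u v : H1 → ℝ} {p : H1} (h : u =ᶠ[nhds p] v) :
    Yd u p = Yd v p := by
  rw [Yd, Yd, h.fderiv_eq]

lemma eventually_horizontal_ne_zero {p : H1} (hp : p.1 ^ 2 + p.2.1 ^ 2 ≠ 0) :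
    ∀ᶠ q in nhds p, q.1 ^ 2 + q.2.1 ^ 2 ≠ 0 :=
  (isOpen_ne_fun (by fun_prop) continuous_const).mem_nhds hp

section Radial

variable {γ : ℝ} {f : ℝ → ℝ} {q : H1}

lemma rpow_mul_comp_phiH_eq_axialForm :
    (fun q => rhoH q ^ γ * f (phiH q)) = axialForm γ f (fun _ => 0) (fun _ => 0) := by
  funext q; simp [axialForm]

lemma Xd_rpow_mul_comp_phiH (hq : q.1 ^ 2 + q.2.1 ^ 2 ≠ 0) (hf : DifferentiableAt ℝ f (phiH q)) :
    Xd (fun q => rhoH q ^ γ * f (phiH q)) q =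
      axialForm (γ - 4) (fun _ => 0) (fun s => γ * f s) (fun s => -2 * deriv f s) q := by
  rw [rpow_mul_comp_phiH_eq_axialForm,
    Xd_axialForm hq hf.hasDerivAt (hasDerivAt_const _ _) (hasDerivAt_const _ _), axialForm]
  ring

lemma Yd_rpow_mul_comp_phiH (hq : q.1 ^ 2 + q.2.1 ^ 2 ≠ 0) (hf : DifferentiableAt ℝ f (phiH q)) :
    Yd (fun q => rhoH q ^ γ * f (phiH q)) q =
      axialForm (γ - 4) (fun _ => 0) (fun s => 2 * deriv f s) (fun s => γ * f s) q := by
  rw [rpow_mul_comp_phiH_eq_axialForm,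
    Yd_axialForm hq hf.hasDerivAt (hasDerivAt_const _ _) (hasDerivAt_const _ _), axialForm]
  ring

end Radial

theorem sublaplacian_homogeneous_axial (α : ℝ) (f : ℝ → ℝ) (hf : ContDiff ℝ 2 f)
    (p : H1) (hxy : p.1^2 + p.2.1^2 ≠ 0) :
    lapH (fun q => rhoH q ^ α * f (phiH q)) p =
      rhoH p ^ (α - 2) *
        (α * (α + 2) * Real.sin (phiH p) * f (phiH p) +
          4 * deriv (fun s => Real.sin s * deriv f s) (phiH p)) := by
  have hf₁ : Differentiable ℝ f := hf.differentiable (by norm_num)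
  have hf₂ := hf.differentiable_deriv_two
  have hX := Xd_congr_of_eventuallyEq ((eventually_horizontal_ne_zero hxy).mono
    fun q hq => Xd_rpow_mul_comp_phiH (γ := α) hq (hf₁ _))
  have hY := Yd_congr_of_eventuallyEq ((eventually_horizontal_ne_zero hxy).mono
    fun q hq => Yd_rpow_mul_comp_phiH (γ := α) hq (hf₁ _))
  have hw := gaugeQuartic_pos hxy
  have hρ := rhoH_pos hw
  have hf₁' := (hf₁ (phiH p)).hasDerivAt
  have hf₂' := (hf₂ (phiH p)).hasDerivAt
  rw [lapH, hX, hY,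
    Xd_axialForm hxy (hasDerivAt_const _ _) (hf₁'.const_mul _) (hf₂'.const_mul _),
    Yd_axialForm hxy (hasDerivAt_const _ _) (hf₂'.const_mul _) (hf₁'.const_mul _),
    deriv_fun_mul differentiableAt_sin (hf₂ _), Real.deriv_sin, sin_phiH hw, cos_phiH hw,
    show α - 2 = α - 4 - 4 + 4 + 2 by ring, rpow_add hρ, rpow_add hρ, rpow_ofNat, rpow_ofNat,
    rhoH_pow_four]
  field_simp
  unfold gaugeX gaugeY gaugeQuartic
  ring
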